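/- arXiv:1408.6883 — 2 statements merged into one kernel-verified Lean document; each statement's English description precedes it below -/
import Mathlib

section
/- Let p be a prime, n ≥ 2, H cyclic of order n+1 generated by h, P cyclic of order p generated by g, G = H × P, and a = (a_0, a_1,...,a_n) an almost p-ary sequence with a_0 = 0 and a_i = ζ_p^{b_i} for 1 ≤ i ≤ n. Set R = {g^{b_i}h^i : 1 ≤ i ≤ n}. Then a is an almost p-ary nearly perfect sequence of type γ if and only if R is an (n+1, p, n, (n-γ-1)/p + γ, 0, (n-γ-1)/p)-direct product difference set in G relative to H and P. -/
/-- The subset `R = {(i, b i) : 0 ≠ i ∈ ℤ_{n+1}}` of `ℤ_{n+1} × ℤ_p` associated to an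
almost `p`-ary sequence with exponents `b`. -/
def Rset' (n p : ℕ) (b : ZMod (n + 1) → ℕ) : Finset (ZMod (n + 1) × ZMod p) :=
  (Finset.univ.filter (fun i : ZMod (n + 1) => i ≠ 0)).image
    fun i : ZMod (n + 1) => (i, (b i : ZMod p))

/-- Number of representations of `g` as a difference `r₁ - r₂`, `r₁ ≠ r₂ ∈ R`. -/
def diffCount' (n p : ℕ) (b : ZMod (n + 1) → ℕ) (g : ZMod (n + 1) × ZMod p) : ℕ :=
  ((Rset' n p b ×ˢ Rset' n p b).filter (fun q => q.1 ≠ q.2 ∧ q.1 - q.2 = g)).card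
open Finset
open Polynomial Finset

lemma key_lin (p : ℕ) (hp : p.Prime) (ζ : ℂ) (hζ : IsPrimitiveRoot ζ p) (c : ℕ → ℤ) (γ : ℤ)
    (h : ∑ k ∈ Finset.range p, (c k : ℂ) * ζ ^ k = (γ : ℂ)) :
    (∀ k, 1 ≤ k → k < p → c k = c 1) ∧ c 0 = γ + c 1 := by
  haveI : Fact p.Prime := ⟨hp⟩
  set f : ℚ[X] := (∑ k ∈ Finset.range p, C (c k : ℚ) * X ^ k) - C (γ : ℚ) with hf
  have hfe : aeval ζ f = 0 := by
    simp only [hf, map_sub, map_sum, map_mul, map_pow, aeval_C, aeval_X, map_intCast]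
    rw [h]; ring
  have hmin : minpoly ℚ ζ = cyclotomic p ℚ :=
    (Polynomial.cyclotomic_eq_minpoly_rat hζ hp.pos).symm
  have hdvd : cyclotomic p ℚ ∣ f := hmin ▸ minpoly.dvd ℚ ζ hfe
  obtain ⟨q, hq⟩ := hdvd
  have hcne : cyclotomic p ℚ ≠ 0 := cyclotomic_ne_zero p ℚ
  have hdegf : f.degree ≤ (p - 1 : ℕ) := by
    apply (degree_sub_le _ _).trans
    simp only [sup_le_iff]
    constructor
    · apply (degree_sum_le _ _).trans
      apply Finset.sup_le
      intro k hk
      apply (degree_C_mul_X_pow_le _ _).trans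
      exact_mod_cast Nat.le_sub_one_of_lt (Finset.mem_range.mp hk)
    · exact (degree_C_le).trans (by exact_mod_cast Nat.zero_le _)
  have hdegc : (cyclotomic p ℚ).natDegree = p - 1 := by
    rw [natDegree_cyclotomic, Nat.totient_prime hp]
  have hq0 : q = C (q.coeff 0) := by
    rcases eq_or_ne q 0 with h0 | h0
    · simp [h0]
    · have hfne : f ≠ 0 := hq ▸ mul_ne_zero hcne h0
      have h1 : f.natDegree ≤ p - 1 := natDegree_le_iff_degree_le.mpr hdegf
      have h2 : f.natDegree = (p - 1) + q.natDegree := by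
        rw [hq, natDegree_mul hcne h0, hdegc]
      have : q.natDegree = 0 := by omega
      exact (eq_C_of_natDegree_eq_zero this)
  set r := q.coeff 0 with hr
  have hfr : f = C r * cyclotomic p ℚ := by rw [hq, ← hq0]; ring
  -- coefficients
  have hcoeff : ∀ k, k < p → f.coeff k = r := by
    intro k hk
    rw [hfr, coeff_C_mul, cyclotomic_prime ℚ p]
    simp only [finset_sum_coeff, coeff_X_pow]
    rw [Finset.sum_eq_single k (fun b _ hb => if_neg (Ne.symm hb)) (fun hknot => absurd (Finset.mem_range.mpr hk) hknot)]
    simp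
  have hfc : ∀ k, k < p → f.coeff k = (c k : ℚ) - (if k = 0 then (γ:ℚ) else 0) := by
    intro k hk
    rw [hf]
    simp only [coeff_sub, finset_sum_coeff, coeff_C_mul, coeff_X_pow, coeff_C]
    congr 1
    rw [Finset.sum_eq_single k (fun b _ hb => by simp [Ne.symm hb]) (fun hknot => absurd (Finset.mem_range.mpr hk) hknot)]
    simp
  have hp1 : 1 < p := hp.one_lt
  have hc1 : (c 1 : ℚ) = r := by
    have := (hfc 1 hp1).symm.trans (hcoeff 1 hp1); simpa using this
  constructor
  · intro k hk1 hkp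
    have := (hfc k hkp).symm.trans (hcoeff k hkp)
    rw [if_neg (by omega)] at this
    have : (c k : ℚ) = (c 1 : ℚ) := by rw [hc1]; simpa using this
    exact_mod_cast this
  · have h0 := (hfc 0 hp.pos).symm.trans (hcoeff 0 hp.pos)
    rw [if_pos rfl, ← hc1] at h0
    have : (c 0 : ℚ) = (γ : ℚ) + (c 1 : ℚ) := by linarith
    exact_mod_cast this
open Finset

lemma sum_zmod (p : ℕ) [NeZero p] (F : ZMod p → ℂ) :
    ∑ y : ZMod p, F y = ∑ k ∈ Finset.range p, F (k : ZMod p) := by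
  refine Finset.sum_bij' (fun y _ => y.val) (fun k _ => (k : ZMod p)) ?_ ?_ ?_ ?_ ?_
  · intro y _; exact Finset.mem_range.mpr (ZMod.val_lt y)
  · intro k _; exact mem_univ _
  · intro y _; exact ZMod.natCast_rightInverse y
  · intro k hk; exact ZMod.val_cast_of_lt (Finset.mem_range.mp hk)
  · intro y _; rw [ZMod.natCast_rightInverse y]

lemma zpow_zmod {p : ℕ} [NeZero p] {ζ : ℂ} (hz : ζ ^ p = 1) (hz0 : ζ ≠ 0) (m : ℤ) :
    ζ ^ m = ζ ^ ((m : ZMod p)).val := by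
  have hdvd : (p : ℤ) ∣ m - ((m : ZMod p).val : ℤ) := by
    rw [← ZMod.intCast_zmod_eq_zero_iff_dvd]
    push_cast
    rw [ZMod.natCast_rightInverse]
    ring
  obtain ⟨q, hq⟩ := hdvd
  have : m = ((m : ZMod p).val : ℤ) + p * q := by linarith
  calc ζ ^ m = ζ ^ (((m : ZMod p).val : ℤ) + p * q) := by rw [← this]
    _ = ζ ^ ((m : ZMod p).val) := by
        rw [zpow_add₀ hz0, zpow_natCast, zpow_mul, zpow_natCast, hz, one_zpow, mul_one]
open Finset


def Sset (n p : ℕ) (b : ZMod (n + 1) → ℕ) (x : ZMod (n+1)) (y : ZMod p) : Finset (ZMod (n+1)) :=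
  Finset.univ.filter (fun i => i ≠ 0 ∧ i - x ≠ 0 ∧ (b i : ZMod p) - (b (i-x) : ZMod p) = y)

lemma mem_Rset' {n p : ℕ} {b : ZMod (n + 1) → ℕ} {q : ZMod (n + 1) × ZMod p} :
    q ∈ Rset' n p b ↔ ∃ i : ZMod (n+1), i ≠ 0 ∧ q = (i, (b i : ZMod p)) := by
  simp [Rset', eq_comm]

lemma Rcard (n p : ℕ) (b : ZMod (n + 1) → ℕ) : (Rset' n p b).card = n := by
  rw [Rset', Finset.card_image_of_injOn (fun i _ j _ h => congrArg Prod.fst h),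
    Finset.filter_ne', Finset.card_erase_of_mem (mem_univ _), Finset.card_univ, ZMod.card]
  simp

lemma diff0 {n p : ℕ} {b : ZMod (n + 1) → ℕ} {y : ZMod p} (hy : y ≠ 0) :
    diffCount' n p b (0, y) = 0 := by
  rw [diffCount', Finset.card_eq_zero, Finset.filter_eq_empty_iff]
  rintro ⟨q1, q2⟩ hq
  simp only [Finset.mem_product] at hq
  rintro ⟨hne, hsub⟩
  obtain ⟨i, hi, rfl⟩ := mem_Rset'.mp hq.1
  obtain ⟨j, hj, rfl⟩ := mem_Rset'.mp hq.2
  rw [Prod.mk_sub_mk, Prod.mk.injEq] at hsub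
  have : i = j := by have := hsub.1; rwa [sub_eq_zero] at this
  subst this
  exact hne rfl

lemma diffS {n p : ℕ} {b : ZMod (n + 1) → ℕ} {x : ZMod (n+1)} (hx : x ≠ 0) (y : ZMod p) :
    diffCount' n p b (x, y) = (Sset n p b x y).card := by
  rw [diffCount']
  symm
  apply Finset.card_bij (fun i _ => ((i, (b i : ZMod p)), (i - x, (b (i-x) : ZMod p))))
  · intro i hi
    simp only [Sset, Finset.mem_filter, Finset.mem_univ, true_and] at hi
    obtain ⟨h1, h2, h3⟩ := hi
    simp only [Finset.mem_filter, Finset.mem_product]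
    refine ⟨⟨mem_Rset'.mpr ⟨i, h1, rfl⟩, mem_Rset'.mpr ⟨i - x, h2, rfl⟩⟩, ?_, ?_⟩
    · intro hcon
      have : i = i - x := congrArg Prod.fst hcon
      apply hx
      have := sub_eq_zero.mpr this
      simpa using this
    · rw [Prod.mk_sub_mk, Prod.mk.injEq]
      exact ⟨by ring, h3⟩
  · intro i hi j hj hij
    exact congrArg (Prod.fst ∘ Prod.fst) hij
  · rintro ⟨q1, q2⟩ hq
    simp only [Finset.mem_filter, Finset.mem_product] at hq
    obtain ⟨⟨hq1, hq2⟩, hne, hsub⟩ := hq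
    obtain ⟨i, hi, rfl⟩ := mem_Rset'.mp hq1
    obtain ⟨j, hj, rfl⟩ := mem_Rset'.mp hq2
    rw [Prod.mk_sub_mk, Prod.mk.injEq] at hsub
    have hji : j = i - x := by rw [← hsub.1]; ring
    subst hji
    refine ⟨i, ?_, rfl⟩
    simp only [Sset, Finset.mem_filter, Finset.mem_univ, true_and]
    exact ⟨hi, hj, hsub.2⟩

lemma sumS {n p : ℕ} [NeZero p] {b : ZMod (n + 1) → ℕ} {x : ZMod (n+1)} (hx : x ≠ 0) :
    ∑ y : ZMod p, (Sset n p b x y).card = n - 1 := by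
  have hT : (Finset.univ.filter (fun i : ZMod (n+1) => i ≠ 0 ∧ i - x ≠ 0)).card = n - 1 := by
    have : (Finset.univ.filter (fun i : ZMod (n+1) => i ≠ 0 ∧ i - x ≠ 0))
        = Finset.univ \ {0, x} := by
      ext i
      simp [sub_ne_zero, and_comm]
    rw [this, Finset.card_sdiff_of_subset (Finset.subset_univ _), Finset.card_univ, ZMod.card,
      Finset.card_insert_of_notMem (by simpa using (Ne.symm hx)), Finset.card_singleton]
    omega
  rw [← hT]
  rw [Finset.card_eq_sum_card_fiberwise
    (f := fun i => (b i : ZMod p) - (b (i-x) : ZMod p)) (t := Finset.univ)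
    (fun i _ => mem_univ _)]
  apply Finset.sum_congr rfl
  intro y _
  congr 1
  rw [Sset, Finset.filter_filter]
  simp [and_assoc]

lemma corr_sum (p n : ℕ) [NeZero p] (ζ : ℂ) (hζ : IsPrimitiveRoot ζ p)
    (b : ZMod (n + 1) → ℕ) (a : ZMod (n + 1) → ℂ) (ha0 : a 0 = 0)
    (ha : ∀ i : ZMod (n + 1), i ≠ 0 → a i = ζ ^ b i) (t : ZMod (n+1)) :
    ∑ i : ZMod (n + 1), a i * (starRingEnd ℂ) (a (i + t)) =
      ∑ y : ZMod p, ((Sset n p b (-t) y).card : ℂ) * ζ ^ (y.val) := by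
  have hz : ζ ^ p = 1 := hζ.pow_eq_one
  have hz0 : ζ ≠ 0 := hζ.ne_zero (NeZero.ne p)
  have hnorm : ‖ζ‖ = 1 := Complex.norm_eq_one_of_pow_eq_one hz (NeZero.ne p)
  set T : Finset (ZMod (n+1)) :=
    Finset.univ.filter (fun i => i ≠ 0 ∧ i - (-t) ≠ 0) with hTdef
  have h1 : ∑ i : ZMod (n + 1), a i * (starRingEnd ℂ) (a (i + t))
      = ∑ i ∈ T, a i * (starRingEnd ℂ) (a (i + t)) := by
    symm
    apply Finset.sum_subset (Finset.filter_subset _ _)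
    intro i _ hi
    simp only [hTdef, Finset.mem_filter, Finset.mem_univ, true_and, not_and_or,
      not_ne_iff, sub_neg_eq_add] at hi
    rcases hi with h | h
    · rw [h, ha0]; ring
    · rw [h, ha0]; simp
  have key : ∀ i ∈ T, a i * (starRingEnd ℂ) (a (i + t))
      = ζ ^ (((b i : ZMod p) - (b (i - (-t)) : ZMod p)).val) := by
    intro i hi
    simp only [hTdef, Finset.mem_filter, Finset.mem_univ, true_and] at hi
    rw [sub_neg_eq_add] at hi ⊢
    rw [ha i hi.1, ha _ hi.2, map_pow, ← Complex.inv_eq_conj hnorm, inv_pow,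
      ← zpow_natCast ζ (b i), ← zpow_natCast ζ (b (i+t)), ← zpow_neg,
      ← zpow_add₀ hz0, zpow_zmod hz hz0]
    have : ((((b i : ℤ) + -(b (i+t) : ℤ)) : ℤ) : ZMod p)
        = (b i : ZMod p) - (b (i+t) : ZMod p) := by push_cast; ring
    rw [this]
  rw [h1, Finset.sum_congr rfl key,
    ← Finset.sum_fiberwise_of_maps_to
      (g := fun i => (b i : ZMod p) - (b (i - (-t)) : ZMod p)) (t := Finset.univ)
      (fun i _ => Finset.mem_univ _)]
  apply Finset.sum_congr rfl
  intro y _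
  rw [Finset.sum_congr rfl (fun i hi => by rw [(Finset.mem_filter.mp hi).2]),
    Finset.sum_const, nsmul_eq_mul]
  congr 2
  rw [Sset, hTdef, Finset.filter_filter]
  simp [and_assoc]
theorem stmt_12 (p n : ℕ) (hp : p.Prime) [NeZero p] (hn : 2 ≤ n)
    (γ : ℤ) (ζ : ℂ) (hζ : IsPrimitiveRoot ζ p)
    (b : ZMod (n + 1) → ℕ) (a : ZMod (n + 1) → ℂ) (ha0 : a 0 = 0)
    (ha : ∀ i : ZMod (n + 1), i ≠ 0 → a i = ζ ^ b i) :
    (∀ t : ZMod (n + 1), t ≠ 0 →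
        ∑ i : ZMod (n + 1), a i * (starRingEnd ℂ) (a (i + t)) = γ) ↔
    ((p : ℤ) ∣ (n : ℤ) - γ - 1 ∧
     (Rset' n p b).card = n ∧
     (∀ x : ZMod (n + 1), x ≠ 0 →
        (diffCount' n p b (x, 0) : ℤ) = ((n : ℤ) - γ - 1) / p + γ) ∧
     (∀ y : ZMod p, y ≠ 0 → (diffCount' n p b (0, y) : ℤ) = 0) ∧
     (∀ x : ZMod (n + 1), ∀ y : ZMod p, x ≠ 0 → y ≠ 0 →
        (diffCount' n p b (x, y) : ℤ) = ((n : ℤ) - γ - 1) / p)) := by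
  haveI : Fact (1 < n + 1) := ⟨by omega⟩
  have pnz : (p : ℤ) ≠ 0 := by exact_mod_cast hp.pos.ne'
  have hp1cast : ((p - 1 : ℕ) : ℤ) = (p : ℤ) - 1 := by
    rw [Nat.cast_sub hp.one_le]; simp
  constructor
  · intro H
    have main : ∀ x : ZMod (n+1), x ≠ 0 →
        ((p : ℤ) ∣ (n : ℤ) - γ - 1 ∧
         ((Sset n p b x 0).card : ℤ) = ((n : ℤ) - γ - 1) / p + γ ∧
         (∀ y : ZMod p, y ≠ 0 → ((Sset n p b x y).card : ℤ) = ((n : ℤ) - γ - 1) / p)) := by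
      intro x hx
      have hsum := corr_sum p n ζ hζ b a ha0 ha (-x)
      rw [neg_neg] at hsum
      have hC := H (-x) (neg_ne_zero.mpr hx)
      rw [hsum] at hC
      set c : ℕ → ℤ := fun k => ((Sset n p b x ((k : ZMod p))).card : ℤ) with hc
      have hconv : ∑ k ∈ Finset.range p, (c k : ℂ) * ζ ^ k = (γ : ℂ) := by
        rw [← hC, sum_zmod p (fun y => ((Sset n p b x y).card : ℂ) * ζ ^ y.val)]
        apply Finset.sum_congr rfl
        intro k hk
        rw [hc]
        push_cast
        rw [ZMod.val_cast_of_lt (Finset.mem_range.mp hk)]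
      obtain ⟨h1, h2⟩ := key_lin p hp ζ hζ c γ hconv
      have hc0 : ((Sset n p b x 0).card : ℤ) = γ + c 1 := by
        have : ((Sset n p b x 0).card : ℤ) = c 0 := by simp [hc]
        rw [this, h2]
      have hcy : ∀ y : ZMod p, y ≠ 0 → ((Sset n p b x y).card : ℤ) = c 1 := by
        intro y hy
        have hv0 : y.val ≠ 0 := fun h => hy (by
          rw [← ZMod.natCast_rightInverse y, h]; simp)
        have := h1 y.val (by omega) (ZMod.val_lt y)
        rw [← this, hc]
        simp [ZMod.natCast_rightInverse y]
      have htot : (n : ℤ) - 1 = γ + p * c 1 := by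
        have hs := sumS (p := p) (b := b) hx
        have hsZ : ∑ y : ZMod p, ((Sset n p b x y).card : ℤ) = (n : ℤ) - 1 := by
          have := congrArg (Nat.cast : ℕ → ℤ) hs
          push_cast [Nat.cast_sub (by omega : 1 ≤ n)] at this
          exact this
        rw [← Finset.add_sum_erase _ _ (Finset.mem_univ (0 : ZMod p)),
          Finset.sum_congr rfl (fun y hy => hcy y (Finset.mem_erase.mp hy).1),
          Finset.sum_const, Finset.card_erase_of_mem (Finset.mem_univ _),
          Finset.card_univ, ZMod.card, hc0, nsmul_eq_mul, hp1cast] at hsZ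
        linarith
      have hdvd : (p : ℤ) ∣ (n : ℤ) - γ - 1 := ⟨c 1, by linarith⟩
      have hdivv : ((n : ℤ) - γ - 1) / p = c 1 := by
        rw [show (n : ℤ) - γ - 1 = p * c 1 by linarith, Int.mul_ediv_cancel_left _ pnz]
      refine ⟨hdvd, ?_, ?_⟩
      · rw [hc0, hdivv]; ring
      · intro y hy; rw [hcy y hy, hdivv]
    have h1ne : (1 : ZMod (n+1)) ≠ 0 := one_ne_zero
    refine ⟨(main 1 h1ne).1, Rcard n p b, ?_, ?_, ?_⟩
    · intro x hx; rw [diffS hx]; exact (main x hx).2.1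
    · intro y hy; rw [diff0 hy]; simp
    · intro x y hx hy; rw [diffS hx]; exact (main x hx).2.2 y hy
  · rintro ⟨hdvd, hcard, h3, h4, h5⟩
    intro t ht
    rw [corr_sum p n ζ hζ b a ha0 ha t]
    have hx : (-t) ≠ 0 := neg_ne_zero.mpr ht
    set m : ℤ := ((n : ℤ) - γ - 1) / p with hm
    have hS0 : ((Sset n p b (-t) 0).card : ℤ) = m + γ := by
      rw [← diffS hx]; exact h3 _ hx
    have hSy : ∀ y : ZMod p, y ≠ 0 → ((Sset n p b (-t) y).card : ℤ) = m := by
      intro y hy; rw [← diffS hx]; exact h5 _ y hx hy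
    have hgeom : ∑ y : ZMod p, ζ ^ y.val = 0 := by
      rw [sum_zmod p (fun y => ζ ^ y.val),
        Finset.sum_congr rfl (fun k hk => by
          rw [ZMod.val_cast_of_lt (Finset.mem_range.mp hk)])]
      exact hζ.geom_sum_eq_zero hp.one_lt
    have herase : ∑ y ∈ Finset.univ.erase (0 : ZMod p), ζ ^ y.val = -1 := by
      have h : ζ ^ (0 : ZMod p).val + ∑ y ∈ Finset.univ.erase (0 : ZMod p), ζ ^ y.val = 0 := by
        rw [Finset.add_sum_erase Finset.univ (fun y : ZMod p => ζ ^ y.val)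
          (Finset.mem_univ 0)]
        exact hgeom
      rw [ZMod.val_zero, pow_zero] at h
      linear_combination h
    rw [← Finset.add_sum_erase _ _ (Finset.mem_univ (0 : ZMod p)),
      Finset.sum_congr rfl (fun y hy => by
        rw [show ((Sset n p b (-t) y).card : ℂ) = (m : ℂ) by
          exact_mod_cast congrArg (Int.cast : ℤ → ℂ) (hSy y (Finset.mem_erase.mp hy).1)]),
      ← Finset.mul_sum, herase, ZMod.val_zero, pow_zero, mul_one,
      show ((Sset n p b (-t) 0).card : ℂ) = (m : ℂ) + (γ : ℂ) by exact_mod_cast hS0]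
    ring
end

section
/- Let p be a prime, n ≥ 2, and a a p-ary nearly perfect sequence of period n and type γ ≠ 0 with |γ| < n. Let q ≠ p be a prime with q^r exactly dividing (γ+1)n - γ, and suppose q is self-conjugate modulo up for some divisor u ≥ 1 of n with q ∤ u. Then r is even. -/
/-!
Put `S = ∑ aᵢ ∈ ℤ[ζ_p]`. The autocorrelation condition gives `S · S̄ = (γ + 1) n - γ`. As `q ≠ p`,
`Φ_p` is squarefree mod `q`, so `(q)` is a radical ideal of `ℤ[ζ_p]`; as `q ^ j ≡ -1 (mod p)`,
complex conjugation agrees with the `j`-th power of Frobenius modulo `q`. Hence if `q` divides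
`S · S̄ ≡ S ^ (q ^ j + 1)`, then `q ∣ S`, and replacing `S` by `S / q` lowers the exponent of `q` in
`S · S̄` by exactly two. So that exponent is even.
-/

open Polynomial

theorem even_of_pow_dvd_mul_map_self {R : Type*} [CommRing R] [IsDomain R] {q N : ℕ} (hq : q ≠ 0)
    {σ : R →+* R} (hrad : IsRadical (q : R)) (hσ : ∀ x, (q : R) ∣ σ x - x ^ N)
    (hdvd : ∀ a b : ℤ, (a : R) ∣ b → a ∣ b) {s : R} {z : ℤ} (hs : s * σ s = z) {r : ℕ}
    (hr : (q : ℤ) ^ r ∣ z) (hr1 : ¬ (q : ℤ) ^ (r + 1) ∣ z) : Even r := by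
  induction r using Nat.strong_induction_on generalizing s z with
  | _ r ih =>
  rcases Nat.eq_zero_or_pos r with rfl | hr0
  · exact Even.zero
  have hqs : (q : R) ∣ s := by
    refine hrad (N + 1) s ?_
    have hqz : (q : R) ∣ s * σ s := by
      rw [hs]; exact_mod_cast Int.cast_dvd_cast _ _ ((dvd_pow_self _ hr0.ne').trans hr)
    have := dvd_sub hqz ((hσ s).mul_left s)
    rwa [mul_sub, sub_sub_cancel, ← pow_succ'] at this
  obtain ⟨t, rfl⟩ := hqs
  have hqR : (q : R) ≠ 0 := fun h => hq (by exact_mod_cast zero_dvd_iff.1 (hdvd 0 q (by simp [h])))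
  have hst : q * t * σ (q * t) = (q : R) ^ 2 * (t * σ t) := by rw [map_mul, map_natCast]; ring
  obtain ⟨z', rfl⟩ : (q : ℤ) ^ 2 ∣ z := hdvd _ _ ⟨t * σ t, by push_cast; rw [← hs, hst]⟩
  have ht : t * σ t = z' :=
    mul_left_cancel₀ (pow_ne_zero 2 hqR) (by rw [← hst, hs]; push_cast; ring)
  have hr2 : 2 ≤ r := by
    by_contra! hr2
    obtain rfl : r = 1 := by omega
    exact hr1 (dvd_mul_right _ _)
  obtain ⟨r, rfl⟩ := Nat.exists_eq_add_of_le' hr2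
  have hq2 : (q : ℤ) ^ 2 ≠ 0 := pow_ne_zero 2 (by exact_mod_cast hq)
  rw [pow_add, mul_comm, mul_dvd_mul_iff_left hq2] at hr
  rw [add_right_comm, pow_add, mul_comm, mul_dvd_mul_iff_left hq2] at hr1
  exact (ih r (by omega) ht hr hr1).add even_two

namespace AdjoinRoot

variable {f : ℤ[X]}

theorem intCast_dvd_intCast_iff (hf : f.Monic) (hdeg : f.natDegree ≠ 0) {a b : ℤ} :
    (a : AdjoinRoot f) ∣ b ↔ a ∣ b := by
  refine ⟨fun h => ?_, Int.cast_dvd_cast a b⟩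
  have hnorm := map_dvd (Algebra.norm ℤ) h
  rwa [← eq_intCast (algebraMap ℤ (AdjoinRoot f)), ← eq_intCast (algebraMap ℤ (AdjoinRoot f)),
    Algebra.norm_algebraMap_of_basis (powerBasis' hf).basis,
    Algebra.norm_algebraMap_of_basis (powerBasis' hf).basis, Fintype.card_fin,
    powerBasis'_dim, Int.pow_dvd_pow_iff hdeg] at hnorm

theorem natCast_dvd_mk_iff {d : ℕ} {g : ℤ[X]} :
    (d : AdjoinRoot f) ∣ mk f g ↔
      f.map (Int.castRingHom (ZMod d)) ∣ g.map (Int.castRingHom (ZMod d)) := by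
  constructor
  · rintro ⟨y, hy⟩
    obtain ⟨h, rfl⟩ := mk_surjective y
    obtain ⟨c, hc⟩ : f ∣ g - C (d : ℤ) * h := by
      rw [← mk_eq_zero, map_sub, map_mul, mk_C, hy]; simp
    refine ⟨c.map (Int.castRingHom (ZMod d)), ?_⟩
    simpa [sub_eq_zero] using congrArg (Polynomial.map (Int.castRingHom (ZMod d))) hc
  · rintro ⟨c, hc⟩
    obtain ⟨c, rfl⟩ := map_surjective (Int.castRingHom (ZMod d)) ZMod.intCast_surjective c
    obtain ⟨h, hh⟩ : C (d : ℤ) ∣ g - f * c := by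
      refine (C_dvd_iff_dvd_coeff _ _).2 fun i => ?_
      rw [← ZMod.intCast_zmod_eq_zero_iff_dvd, ← eq_intCast (Int.castRingHom (ZMod d)),
        ← coeff_map, Polynomial.map_sub, Polynomial.map_mul, hc, sub_self, coeff_zero]
    refine ⟨mk f h, ?_⟩
    simpa using congrArg (mk f) hh

theorem isRadical_natCast {d : ℕ} (h : IsRadical (f.map (Int.castRingHom (ZMod d)))) :
    IsRadical (d : AdjoinRoot f) := by
  intro k x hx
  obtain ⟨g, rfl⟩ := mk_surjective x
  rw [← map_pow, natCast_dvd_mk_iff, Polynomial.map_pow] at hx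
  exact natCast_dvd_mk_iff.2 (h k _ hx)

theorem natCast_dvd_sub_pow {q : ℕ} [hq : Fact q.Prime] (hf : f.Monic) (hdeg : f.natDegree ≠ 0)
    {k : ℕ} (σ : AdjoinRoot f →+* AdjoinRoot f) (hσ : σ (root f) = root f ^ q ^ k)
    (x : AdjoinRoot f) : (q : AdjoinRoot f) ∣ σ x - x ^ q ^ k := by
  have hunit : (q : AdjoinRoot f) ∈ nonunits (AdjoinRoot f) := fun h => by
    have h1 : ((q : ℤ) : AdjoinRoot f) ∣ ((1 : ℤ) : AdjoinRoot f) := by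
      simpa using isUnit_iff_dvd_one.1 h
    exact hq.out.not_dvd_one (Int.natCast_dvd_natCast.1 ((intCast_dvd_intCast_iff hf hdeg).1 h1))
  let I := Ideal.span {(q : AdjoinRoot f)}
  have := CharP.quotient (AdjoinRoot f) q hunit
  have hfrob : (Ideal.Quotient.mk I).comp σ =
      (iterateFrobenius (AdjoinRoot f ⧸ I) q k).comp (Ideal.Quotient.mk I) :=
    ringHom_ext (RingHom.ext_int _ _) (by simp [hσ, iterateFrobenius_def])
  rw [← Ideal.mem_span_singleton, ← Ideal.Quotient.eq]
  simpa [iterateFrobenius_def] using congrArg (· x) hfrob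

variable {n : ℕ} [NeZero n]

theorem natDegree_cyclotomic_ne_zero : (cyclotomic n ℤ).natDegree ≠ 0 := by
  rw [natDegree_cyclotomic]
  exact (Nat.totient_pos.2 (Nat.pos_of_neZero n)).ne'

instance : IsDomain (AdjoinRoot (cyclotomic n ℤ)) :=
  isDomain_of_prime (cyclotomic.irreducible (Nat.pos_of_neZero n)).prime

instance : NeZero (n : AdjoinRoot (cyclotomic n ℤ)) := by
  refine ⟨fun h => NeZero.ne n ?_⟩
  have h0 : ((0 : ℤ) : AdjoinRoot (cyclotomic n ℤ)) ∣ ((n : ℤ) : AdjoinRoot (cyclotomic n ℤ)) := by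
    simp [h]
  simpa using (intCast_dvd_intCast_iff (cyclotomic.monic n ℤ) natDegree_cyclotomic_ne_zero).1 h0

variable (n) in
theorem isPrimitiveRoot_root_cyclotomic : IsPrimitiveRoot (root (cyclotomic n ℤ)) n := by
  rw [← isRoot_cyclotomic_iff, ← map_cyclotomic n (of (cyclotomic n ℤ)), IsRoot,
    eval_map, eval₂_root]

noncomputable def cyclotomicLift {K : Type*} [CommRing K] [IsDomain K] {ζ : K}
    (hζ : IsPrimitiveRoot ζ n) : AdjoinRoot (cyclotomic n ℤ) →+* K :=
  lift (Int.castRingHom K) ζ <| by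
    rw [eval₂_eq_eval_map, map_cyclotomic]
    exact hζ.isRoot_cyclotomic (Nat.pos_of_neZero n)

@[simp]
theorem cyclotomicLift_root {K : Type*} [CommRing K] [IsDomain K] {ζ : K}
    (hζ : IsPrimitiveRoot ζ n) : cyclotomicLift hζ (root _) = ζ :=
  lift_root _

theorem cyclotomicLift_injective {K : Type*} [Field K] [CharZero K] {ζ : K}
    (hζ : IsPrimitiveRoot ζ n) : Function.Injective (cyclotomicLift hζ) := by
  refine (injective_iff_map_eq_zero _).2 fun x hx => ?_
  obtain ⟨g, rfl⟩ := mk_surjective x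
  rw [cyclotomicLift, lift_mk, ← algebraMap_int_eq, ← aeval_def] at hx
  rw [mk_eq_zero, cyclotomic_eq_minpoly hζ (Nat.pos_of_neZero n)]
  exact minpoly.isIntegrallyClosed_dvd (hζ.isIntegral (Nat.pos_of_neZero n)) hx

theorem cyclotomicLift_apply_eq_conj {ζ : ℂ} (hζ : IsPrimitiveRoot ζ n) {k : ℕ} (hk : n ∣ k + 1)
    {σ : AdjoinRoot (cyclotomic n ℤ) →+* AdjoinRoot (cyclotomic n ℤ)}
    (hσ : σ (root _) = root _ ^ k) (x : AdjoinRoot (cyclotomic n ℤ)) :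
    cyclotomicLift hζ (σ x) = starRingEnd ℂ (cyclotomicLift hζ x) := by
  have hζk : ζ ^ k = starRingEnd ℂ ζ := by
    have h1 : ζ ^ k * ζ = 1 := by rw [← pow_succ]; exact (hζ.pow_eq_one_iff_dvd _).2 hk
    have h2 : starRingEnd ℂ ζ * ζ = 1 := by
      rw [Complex.conj_mul', hζ.norm'_eq_one (NeZero.ne n)]; simp
    exact mul_right_cancel₀ (hζ.ne_zero (NeZero.ne n)) (h1.trans h2.symm)
  have hcomp : (cyclotomicLift hζ).comp σ = (starRingEnd ℂ).comp (cyclotomicLift hζ) :=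
    ringHom_ext (RingHom.ext_int _ _) (by simp [hσ, hζk])
  exact congrArg (· x) hcomp

theorem even_of_pow_dvd_mul_map_self_cyclotomic {q k : ℕ} [hq : Fact q.Prime] (hqn : ¬ q ∣ n)
    {σ : AdjoinRoot (cyclotomic n ℤ) →+* AdjoinRoot (cyclotomic n ℤ)}
    (hσ : σ (root _) = root _ ^ q ^ k) {s : AdjoinRoot (cyclotomic n ℤ)} {z : ℤ}
    (hs : s * σ s = z) {r : ℕ} (hr : (q : ℤ) ^ r ∣ z) (hr1 : ¬ (q : ℤ) ^ (r + 1) ∣ z) :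
    Even r := by
  have : NeZero (n : ZMod q) := ⟨by rwa [Ne, ZMod.natCast_eq_zero_iff]⟩
  have hmonic := cyclotomic.monic n ℤ
  refine even_of_pow_dvd_mul_map_self hq.out.ne_zero ?_
    (natCast_dvd_sub_pow hmonic natDegree_cyclotomic_ne_zero σ hσ)
    (fun _ _ => (intCast_dvd_intCast_iff hmonic natDegree_cyclotomic_ne_zero).1) hs hr hr1
  exact isRadical_natCast (by rw [map_cyclotomic]; exact (squarefree_cyclotomic n _).isRadical)

end AdjoinRoot

theorem sum_mul_conj_sum {G : Type*} [AddCommGroup G] [Fintype G] (a : G → ℂ) :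
    (∑ i, a i) * starRingEnd ℂ (∑ i, a i) = ∑ t, ∑ i, a i * starRingEnd ℂ (a (i + t)) := by
  calc _ = ∑ i, ∑ t, a i * starRingEnd ℂ (a (i + t)) := by
        rw [map_sum, Finset.sum_mul_sum]
        exact Finset.sum_congr rfl fun i _ =>
          (Fintype.sum_equiv (Equiv.addLeft i) _ _ fun _ => rfl).symm
    _ = _ := Finset.sum_comm

theorem sum_mul_conj_sum_of_autocorrelation_eq {G : Type*} [AddCommGroup G] [Fintype G]
    {a : G → ℂ} (ha : ∀ i, ‖a i‖ = 1) {γ : ℂ}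
    (hC : ∀ t ≠ 0, ∑ i, a i * starRingEnd ℂ (a (i + t)) = γ) :
    (∑ i, a i) * starRingEnd ℂ (∑ i, a i) = (γ + 1) * Fintype.card G - γ := by
  classical
  have hC0 : ∑ i, a i * starRingEnd ℂ (a (i + 0)) = Fintype.card G := by
    simp [Complex.mul_conj', ha]
  rw [sum_mul_conj_sum, ← Finset.add_sum_erase _ _ (Finset.mem_univ 0), hC0,
    Finset.sum_congr rfl fun t ht => hC t (Finset.ne_of_mem_erase ht), Finset.sum_const,
    Finset.card_erase_of_mem (Finset.mem_univ 0), Finset.card_univ, nsmul_eq_mul,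
    Nat.cast_sub Fintype.card_pos]
  ring

theorem dvd_pow_add_one_of_natCast_pow_eq_neg_one {q v j : ℕ} (hqv : ¬ q ∣ v)
    (h : (q : ZMod (v / q ^ v.factorization q)) ^ j = -1) : v ∣ q ^ j + 1 := by
  rw [Nat.factorization_eq_zero_of_not_dvd hqv, pow_zero, Nat.div_one] at h
  rw [← ZMod.natCast_eq_zero_iff]
  push_cast
  rw [h, neg_add_cancel]

open AdjoinRoot in
theorem stmt_19_general (p : ℕ) (hp : p.Prime) (n : ℕ) [NeZero n]
    (γ : ℤ)
    (ζ : ℂ) (hζ : IsPrimitiveRoot ζ p)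
    (b : ZMod n → ℕ) (a : ZMod n → ℂ) (ha : ∀ i, a i = ζ ^ b i)
    (hnps : ∀ t : ZMod n, t ≠ 0 →
      ∑ i : ZMod n, a i * (starRingEnd ℂ) (a (i + t)) = γ)
    (q r : ℕ) (hq : q.Prime) (hqp : q ≠ p)
    (hqr : (q : ℤ) ^ r ∣ (γ + 1) * (n : ℤ) - γ)
    (hqr1 : ¬ (q : ℤ) ^ (r + 1) ∣ (γ + 1) * (n : ℤ) - γ)
    (u : ℕ) (hqu : ¬ q ∣ u)
    (j : ℕ)
    (hsc : (q : ZMod ((u * p) / q ^ ((u * p).factorization q))) ^ j = -1) :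
    Even r := by
  have : NeZero p := ⟨hp.ne_zero⟩
  have : Fact q.Prime := ⟨hq⟩
  have hqp' : ¬ q ∣ p := fun h => hqp ((Nat.prime_dvd_prime_iff_eq hq hp).1 h)
  have hpj : p ∣ q ^ j + 1 := (dvd_mul_left p u).trans <|
    dvd_pow_add_one_of_natCast_pow_eq_neg_one (fun h => (hq.dvd_mul.1 h).elim hqu hqp') hsc
  have hS : (∑ i, a i) * starRingEnd ℂ (∑ i, a i) = ((γ + 1) * n - γ : ℤ) := by
    rw [sum_mul_conj_sum_of_autocorrelation_eq
      (fun i => by rw [ha i, norm_pow, hζ.norm'_eq_one hp.ne_zero, one_pow]) hnps, ZMod.card]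
    push_cast
    ring
  let σ := cyclotomicLift ((isPrimitiveRoot_root_cyclotomic p).pow_of_coprime (q ^ j)
    (Nat.Coprime.coprime_dvd_right hpj (by simp)))
  have hσ : σ (root _) = root _ ^ q ^ j := cyclotomicLift_root _
  let s : AdjoinRoot (cyclotomic p ℤ) := ∑ i, root _ ^ b i
  have hs : s * σ s = ((γ + 1) * n - γ : ℤ) := cyclotomicLift_injective hζ <| by
    rw [map_mul, cyclotomicLift_apply_eq_conj hζ hpj hσ, map_intCast, ← hS]
    simp only [s, map_sum, map_pow, cyclotomicLift_root, ha]
  exact even_of_pow_dvd_mul_map_self_cyclotomic hqp' hσ hs hqr hqr1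

theorem stmt_19 (p : ℕ) (hp : p.Prime) (n : ℕ) (hn : 2 ≤ n) [NeZero n]
    (γ : ℤ) (hγ0 : γ ≠ 0) (hγn : |γ| < (n : ℤ))
    (ζ : ℂ) (hζ : IsPrimitiveRoot ζ p)
    (b : ZMod n → ℕ) (a : ZMod n → ℂ) (ha : ∀ i, a i = ζ ^ b i)
    (hnps : ∀ t : ZMod n, t ≠ 0 →
      ∑ i : ZMod n, a i * (starRingEnd ℂ) (a (i + t)) = γ)
    (q r : ℕ) (hq : q.Prime) (hqp : q ≠ p)
    (hqr : (q : ℤ) ^ r ∣ (γ + 1) * (n : ℤ) - γ)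
    (hqr1 : ¬ (q : ℤ) ^ (r + 1) ∣ (γ + 1) * (n : ℤ) - γ)
    (u : ℕ) (hu : u ∣ n) (hu1 : 1 ≤ u) (hqu : ¬ q ∣ u)
    (j : ℕ)
    (hsc : (q : ZMod ((u * p) / q ^ ((u * p).factorization q))) ^ j = -1) :
    Even r :=
  stmt_19_general p hp n γ ζ hζ b a ha hnps q r hq hqp hqr hqr1 u hqu j hsc
end
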